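/- arXiv:2407.16778 — 4 statements merged into one kernel-verified Lean document; each statement's English description precedes it below -/
import Mathlib

section
/- Let n ≥ 1, let p, q be integers with 1 ≤ p ≤ q ≤ n, and let A be an n×n real matrix. Suppose x, y ∈ ℝⁿ and λ, μ ∈ ℝ satisfy (A ⊗_p x)_i = λ + x_i and (A ⊗_q y)_i = μ + y_i for all i ∈ {1,…,n}. Then λ ≤ μ. (In particular, the maxmin-ω eigenvalues satisfy λ_1 ≤ λ_2 ≤ ⋯ ≤ λ_n.) -/
/-- The maxmin-`p` value of `s : Fin n → ℝ`: the `p`-th smallest element (1-indexed) of the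
multiset `{s 0, …, s (n-1)}`, counted with multiplicity. -/
noncomputable def maxmin {n : ℕ} (p : ℕ) (s : Fin n → ℝ) : ℝ :=
  (Multiset.sort (Multiset.map s (Finset.univ : Finset (Fin n)).val) (· ≤ ·)).getD (p - 1) 0

/-- The maxmin-`p` matrix-vector product: `(A ⊗_p x)_i = ⊕_p (j ↦ A i j + x j)`. -/
noncomputable def mmProd {n : ℕ} (p : ℕ) (A : Fin n → Fin n → ℝ) (x : Fin n → ℝ) :
    Fin n → ℝ :=
  fun i => maxmin p (fun j => A i j + x j)

/-!
At an index `i` where `x - y` is largest, every term `A i j + x j` is at most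
`A i j + y j + (x i - y i)`. Since the `p`-th smallest of the first family is at most the
`q`-th smallest of the second, `λ + x i ≤ μ + y i + (x i - y i)`.
-/

open Finset

theorem List.Pairwise.getElem_le_iff_lt_countP {α : Type*} [LinearOrder α] {L : List α}
    (hL : L.Pairwise (· ≤ ·)) {k : ℕ} (hk : k < L.length) (v : α) :
    L[k] ≤ v ↔ k < L.countP (· ≤ v) := by
  have hsplit : L.countP (· ≤ v) =
      (L.take k).countP (· ≤ v) + (L[k] :: L.drop (k + 1)).countP (· ≤ v) := by
    rw [← List.countP_append, ← List.drop_eq_getElem_cons hk, List.take_append_drop]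
  have hsorted : (L.take k ++ L[k] :: L.drop (k + 1)).Pairwise (· ≤ ·) := by
    rwa [← List.drop_eq_getElem_cons hk, List.take_append_drop]
  obtain ⟨-, hcons, hcross⟩ := List.pairwise_append.mp hsorted
  have hhead : ∀ a ∈ L.take k, a ≤ L[k] := fun a ha => hcross a ha L[k] List.mem_cons_self
  have htail : ∀ b ∈ L.drop (k + 1), L[k] ≤ b := (List.pairwise_cons.mp hcons).1
  have hlen : (L.take k).length = k := List.length_take_of_le hk.le
  constructor
  · intro h
    have hall : (L.take k).countP (· ≤ v) = k := by
      rw [List.countP_eq_length.mpr fun a ha => decide_eq_true ((hhead a ha).trans h), hlen]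
    rw [hsplit, hall, List.countP_cons_of_pos (p := (· ≤ v)) (decide_eq_true h)]
    omega
  · intro h
    by_contra! hlt
    have hnone : (L[k] :: L.drop (k + 1)).countP (· ≤ v) = 0 := by
      refine List.countP_eq_zero.mpr fun b hb => ?_
      have hkb : L[k] ≤ b := by
        rcases List.mem_cons.mp hb with rfl | hb
        exacts [le_rfl, htail b hb]
      simpa using hlt.trans_le hkb
    have := (L.take k).countP_le_length (p := (· ≤ v))
    omega

theorem maxmin_le_iff {n p : ℕ} (hp : 1 ≤ p) (hpn : p ≤ n) (s : Fin n → ℝ) (v : ℝ) :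
    maxmin p s ≤ v ↔ p ≤ #{j | s j ≤ v} := by
  set m := Multiset.map s (univ : Finset (Fin n)).val
  have hlen : (m.sort (· ≤ ·)).length = n := by simp [m]
  have hcount : (m.sort (· ≤ ·)).countP (· ≤ v) = #{j | s j ≤ v} := by
    rw [← Multiset.coe_countP, Multiset.sort_eq, Multiset.countP_map]
    rfl
  have hidx : p - 1 < (m.sort (· ≤ ·)).length := by omega
  rw [maxmin, List.getD_eq_getElem _ _ hidx,
    (Multiset.pairwise_sort m _).getElem_le_iff_lt_countP hidx, hcount]
  omega

theorem maxmin_le_maxmin_add {n p q : ℕ} (hp : 1 ≤ p) (hpq : p ≤ q) (hqn : q ≤ n)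
    {s t : Fin n → ℝ} {c : ℝ} (hst : ∀ j, s j ≤ t j + c) :
    maxmin p s ≤ maxmin q t + c := by
  rw [maxmin_le_iff hp (hpq.trans hqn)]
  calc p ≤ q := hpq
    _ ≤ #{j | t j ≤ maxmin q t} := (maxmin_le_iff (hp.trans hpq) hqn t _).mp le_rfl
    _ ≤ #{j | s j ≤ maxmin q t + c} :=
      card_le_card fun j => by
        simp only [mem_filter, mem_univ, true_and]
        intro htj
        linarith [hst j]

theorem maxmin_eigenvalues_monotone_general (n p q : ℕ) (hp1 : 1 ≤ p) (hpq : p ≤ q)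
    (hqn : q ≤ n) (A : Fin n → Fin n → ℝ) (x y : Fin n → ℝ) (lam mu : ℝ)
    (hx : ∀ i, mmProd p A x i = lam + x i)
    (hy : ∀ i, mmProd q A y i = mu + y i) :
    lam ≤ mu := by
  have : Nonempty (Fin n) := ⟨⟨0, by omega⟩⟩
  obtain ⟨i, hi⟩ := Finite.exists_max fun j => x j - y j
  have hcmp := maxmin_le_maxmin_add hp1 hpq hqn (s := fun j => A i j + x j)
    (t := fun j => A i j + y j) (c := x i - y i) fun j => by linarith [hi j]
  have hxi := hx i
  have hyi := hy i
  simp only [mmProd] at hxi hyi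
  linarith

/-- The maxmin eigenvalues are monotone in the threshold: `λ_p ≤ λ_q` when `p ≤ q`. -/
theorem maxmin_eigenvalues_monotone (n p q : ℕ) (hn : 1 ≤ n) (hp1 : 1 ≤ p) (hpq : p ≤ q)
    (hqn : q ≤ n) (A : Fin n → Fin n → ℝ) (x y : Fin n → ℝ) (lam mu : ℝ)
    (hx : ∀ i, mmProd p A x i = lam + x i)
    (hy : ∀ i, mmProd q A y i = mu + y i) :
    lam ≤ mu :=
  maxmin_eigenvalues_monotone_general n p q hp1 hpq hqn A x y lam mu hx hy
end

section
/- Let n ≥ 1, let p be an integer with 1 ≤ p ≤ n, let A be an n×n real matrix, and let (D_p^k)_{k≥0} be the associated over-approximation sequence. Then for every k ≥ 0: D_p^k(i,i) = 0 for all i ∈ {1,…,n}, and Zone(D_p^k) is nonempty; that is, each D_p^k is a strongly definite matrix. -/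
/-- `MinMaxValue(F | p, n+1−p)`: the minimum over all pairs `(S₁, S₂)` of subsets of
`{1,…,n}` with `|S₁| = p` and `|S₂| = n+1−p` of `max_{(i,j) ∈ S₁×S₂} F i j`, where the
entries lie in `ℝ ∪ {−∞}` (modeled as `WithBot ℝ`). -/
noncomputable def minMaxValue {n : ℕ} (p : ℕ) (F : Fin n → Fin n → WithBot ℝ) : WithBot ℝ :=
  sInf {v : WithBot ℝ | ∃ S₁ S₂ : Finset (Fin n), S₁.card = p ∧ S₂.card = n + 1 - p ∧
    v = (S₁ ×ˢ S₂).sup (fun q => F q.1 q.2)}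

/-- The over-approximation sequence `(D_p^k)_{k ≥ 0}` associated with `A`: `D_p^0` is the
max-plus identity matrix and
`D_p^{k+1}(i,j) = MinMaxValue((l,m) ↦ A i l − A j m + D_p^k l m | p, n+1−p)`. -/
noncomputable def Dseq {n : ℕ} (A : Fin n → Fin n → ℝ) (p : ℕ) :
    ℕ → Fin n → Fin n → WithBot ℝ
  | 0 => fun i j => if i = j then 0 else ⊥
  | (k + 1) => fun i j =>
      minMaxValue p (fun l m => ((A i l - A j m : ℝ) : WithBot ℝ) + Dseq A p k l m)

/-- The zone of a DBM `D` over `ℝ ∪ {−∞}`: all real vectors `x` with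
`x i − x j ≥ D i j` for all `i, j`. -/
def zone {n : ℕ} (D : Fin n → Fin n → WithBot ℝ) : Set (Fin n → ℝ) :=
  {x | ∀ i j, D i j ≤ ((x i - x j : ℝ) : WithBot ℝ)}

/-!
Write `D = D_p^k` and `D' = D_p^{k+1}`. If `x ∈ Zone(D)`, let `y i` be the `p`-th smallest value of `l ↦ A i l + x l`. Taking for
`S₁` the indices of the `p` smallest values in row `i` and for `S₂` those of the `n+1-p`
largest values in row `j` gives `D'(i,j) ≤ y i - y j`, so `y ∈ Zone(D')`; this forces
`D'(i,i) ≤ 0`. Conversely any admissible `S₁, S₂` meet, since `p + (n+1-p) > n`, and at a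
common index `l` the entry `A i l - A i l + D(l,l)` is `D(l,l) ≥ 0`, so `D'(i,i) ≥ 0`.
-/

lemma exists_orderStatistic {α : Type*} [LinearOrder α] {n p : ℕ} (hp1 : 1 ≤ p)
    (hpn : p ≤ n) (g : Fin n → α) :
    ∃ (y : α) (S₁ S₂ : Finset (Fin n)), S₁.card = p ∧ S₂.card = n + 1 - p ∧
      (∀ l ∈ S₁, g l ≤ y) ∧ (∀ m ∈ S₂, y ≤ g m) := by
  let σ := Tuple.sort g
  have hmono : Monotone (g ∘ σ) := Tuple.monotone_sort g
  let q : Fin n := ⟨p - 1, by omega⟩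
  refine ⟨g (σ q), (Finset.Iic q).image σ, (Finset.Ici q).image σ, ?_, ?_, ?_, ?_⟩
  · rw [Finset.card_image_of_injective _ σ.injective, Fin.card_Iic]
    simp only [q]
    omega
  · rw [Finset.card_image_of_injective _ σ.injective, Fin.card_Ici]
    simp only [q]
    omega
  · simp only [Finset.mem_image, Finset.mem_Iic, forall_exists_index, and_imp]
    rintro _ u hu rfl
    exact hmono hu
  · simp only [Finset.mem_image, Finset.mem_Ici, forall_exists_index, and_imp]
    rintro _ u hu rfl
    exact hmono hu

section minMaxValue

variable {n p : ℕ} {F : Fin n → Fin n → WithBot ℝ}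

lemma minMaxValue_le_sup {S₁ S₂ : Finset (Fin n)} (h₁ : S₁.card = p)
    (h₂ : S₂.card = n + 1 - p) :
    minMaxValue p F ≤ (S₁ ×ˢ S₂).sup (fun q => F q.1 q.2) :=
  csInf_le (OrderBot.bddBelow _) ⟨S₁, S₂, h₁, h₂, rfl⟩

lemma minMaxValue_le_coe_sub {g h : Fin n → ℝ} {a b : ℝ} {S₁ S₂ : Finset (Fin n)}
    (h₁ : S₁.card = p) (h₂ : S₂.card = n + 1 - p) (hg : ∀ l ∈ S₁, g l ≤ a)
    (hh : ∀ m ∈ S₂, b ≤ h m) (hF : ∀ l m, F l m ≤ ((g l - h m : ℝ) : WithBot ℝ)) :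
    minMaxValue p F ≤ ((a - b : ℝ) : WithBot ℝ) := by
  refine (minMaxValue_le_sup h₁ h₂).trans (Finset.sup_le ?_)
  rintro ⟨l, m⟩ hlm
  rw [Finset.mem_product] at hlm
  refine (hF l m).trans (WithBot.coe_le_coe.mpr ?_)
  linarith [hg l hlm.1, hh m hlm.2]

lemma le_minMaxValue_of_le_diag (hp1 : 1 ≤ p) (hpn : p ≤ n) {c : WithBot ℝ}
    (hF : ∀ l, c ≤ F l l) : c ≤ minMaxValue p F := by
  obtain ⟨S₁, -, h₁⟩ := Finset.exists_subset_card_eq (s := (Finset.univ : Finset (Fin n)))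
    (n := p) (by simpa using hpn)
  obtain ⟨S₂, -, h₂⟩ := Finset.exists_subset_card_eq (s := (Finset.univ : Finset (Fin n)))
    (n := n + 1 - p) (by simp; omega)
  refine le_csInf ⟨_, S₁, S₂, h₁, h₂, rfl⟩ ?_
  rintro _ ⟨T₁, T₂, hT₁, hT₂, rfl⟩
  obtain ⟨l, hl⟩ : (T₁ ∩ T₂).Nonempty :=
    Finset.inter_nonempty_of_card_lt_card_add_card (Finset.subset_univ _)
      (Finset.subset_univ _) (by simp only [Finset.card_univ, Fintype.card_fin]; omega)
  rw [Finset.mem_inter] at hl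
  exact (hF l).trans (Finset.le_sup (f := fun q : Fin n × Fin n => F q.1 q.2)
    ((Finset.mem_product (p := (l, l))).mpr hl))

end minMaxValue

lemma le_zero_of_mem_zone {n : ℕ} {D : Fin n → Fin n → WithBot ℝ} {x : Fin n → ℝ}
    (hx : x ∈ zone D) (i : Fin n) : D i i ≤ 0 := by
  simpa using hx i i

section Dseq

variable {n p : ℕ} (A : Fin n → Fin n → ℝ)

lemma Dseq_zero_mem_zone_zero : (0 : Fin n → ℝ) ∈ zone (Dseq A p 0) := by
  intro i j
  simp only [Dseq, Pi.zero_apply, sub_self, WithBot.coe_zero]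
  split <;> simp

lemma zone_Dseq_nonempty (hp1 : 1 ≤ p) (hpn : p ≤ n) :
    ∀ k, (zone (Dseq A p k)).Nonempty
  | 0 => ⟨0, Dseq_zero_mem_zone_zero A⟩
  | k + 1 => by
    obtain ⟨x, hx⟩ := zone_Dseq_nonempty hp1 hpn k
    choose y S₁ S₂ h₁ h₂ hlow hhigh using
      fun i => exists_orderStatistic hp1 hpn (fun l => A i l + x l)
    refine ⟨y, fun i j => ?_⟩
    rw [Dseq]
    refine minMaxValue_le_coe_sub (h₁ i) (h₂ j) (hlow i) (hhigh j) fun l m => ?_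
    calc ((A i l - A j m : ℝ) : WithBot ℝ) + Dseq A p k l m
        ≤ ((A i l - A j m : ℝ) : WithBot ℝ) + ((x l - x m : ℝ) : WithBot ℝ) :=
          add_le_add_right (hx l m) _
      _ = ((A i l + x l - (A j m + x m) : ℝ) : WithBot ℝ) := by
          rw [← WithBot.coe_add]
          ring_nf

lemma Dseq_diag_nonneg (hp1 : 1 ≤ p) (hpn : p ≤ n) : ∀ k i, 0 ≤ Dseq A p k i i
  | 0, i => by simp [Dseq]
  | k + 1, i => by
    rw [Dseq]
    exact le_minMaxValue_of_le_diag hp1 hpn fun l => by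
      simpa using Dseq_diag_nonneg hp1 hpn k l

end Dseq

theorem Dseq_strongly_definite_general (n p : ℕ) (hp1 : 1 ≤ p) (hpn : p ≤ n)
    (A : Fin n → Fin n → ℝ) :
    ∀ k : ℕ, (∀ i, Dseq A p k i i = 0) ∧ (zone (Dseq A p k)).Nonempty := by
  intro k
  obtain ⟨x, hx⟩ := zone_Dseq_nonempty A hp1 hpn k
  exact ⟨fun i => le_antisymm (le_zero_of_mem_zone hx i) (Dseq_diag_nonneg A hp1 hpn k i),
    x, hx⟩

/-- Each `D_p^k` is strongly definite: its diagonal entries are `0` and its zone is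
nonempty. -/
theorem Dseq_strongly_definite (n p : ℕ) (hn : 1 ≤ n) (hp1 : 1 ≤ p) (hpn : p ≤ n)
    (A : Fin n → Fin n → ℝ) :
    ∀ k : ℕ, (∀ i, Dseq A p k i i = 0) ∧ (zone (Dseq A p k)).Nonempty :=
  Dseq_strongly_definite_general n p hp1 hpn A
end

section
/- Let n ≥ 1, let p be an integer with 1 ≤ p ≤ n, let A be an n×n real matrix, and let (D_p^k)_{k≥0} be the associated over-approximation sequence. If x ∈ ℝⁿ and λ ∈ ℝ satisfy (A ⊗_p x)_i = λ + x_i for all i, then x ∈ Zone(D_p^k) for every k ≥ 0. That is, the maxmin-ω eigenspace E_p(A) is contained in every zone Z_p^k (and hence in the stabilized zone). -/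
/-!
If `x` is a maxmin-`p` eigenvector with eigenvalue `λ`, then `λ + x i` is the `p`-th smallest of the
numbers `A i l + x l`, so at least `p` indices `l` have `A i l + x l ≤ λ + x i`, and at least
`n + 1 - p` indices `m` have `λ + x j ≤ A j m + x m`. On this pair of index sets every entry
`A i l - A j m + D_p^k l m` is at most `A i l - A j m + (x l - x m) ≤ x i - x j`, the first step
being the inductive hypothesis `x ∈ Zone(D_p^k)`; hence so is their `MinMaxValue`, which is
`D_p^{k+1} i j`.
-/

open Finset

namespace List

variable {α : Type*} [LinearOrder α] {l : List α}

theorem Pairwise.succ_le_countP_le_getElem (hl : l.Pairwise (· ≤ ·)) {i : ℕ} (hi : i < l.length) :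
    i + 1 ≤ l.countP (· ≤ l[i]) := by
  have htake : ∀ a ∈ l.take (i + 1), a ≤ l[i] := by
    intro a ha
    obtain ⟨j, hj, rfl⟩ := mem_take_iff_getElem.mp ha
    exact hl.rel_get_of_le (a := ⟨j, by omega⟩) (b := ⟨i, hi⟩) (Fin.mk_le_mk.mpr (by omega))
  have hlen : (l.take (i + 1)).countP (· ≤ l[i]) = i + 1 := by
    rw [countP_eq_length.mpr (by simpa using htake), length_take]; omega
  exact hlen ▸ (take_sublist _ _).countP_le

theorem Pairwise.length_sub_le_countP_getElem_le (hl : l.Pairwise (· ≤ ·)) {i : ℕ}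
    (hi : i < l.length) : l.length - i ≤ l.countP (l[i] ≤ ·) := by
  have hdrop : ∀ a ∈ l.drop i, l[i] ≤ a := by
    intro a ha
    obtain ⟨j, hj, rfl⟩ := mem_drop_iff_getElem.mp ha
    exact hl.rel_get_of_le (a := ⟨i, hi⟩) (b := ⟨i + j, by omega⟩) (Fin.mk_le_mk.mpr (by omega))
  have hlen : (l.drop i).countP (l[i] ≤ ·) = l.length - i := by
    rw [countP_eq_length.mpr (by simpa using hdrop), length_drop]
  exact hlen ▸ (drop_sublist _ _).countP_le

end List

theorem Finset.card_filter_eq_countP_sort {ι α : Type*} [Fintype ι] [LinearOrder α]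
    (P : α → Prop) [DecidablePred P] (s : ι → α) :
    #{j | P (s j)} = (Multiset.sort (univ.val.map s) (· ≤ ·)).countP (fun a => decide (P a)) := by
  rw [← Multiset.coe_countP, Multiset.sort_eq, Multiset.countP_map]
  rfl

theorem Finset.length_sort_map_univ {ι α : Type*} [Fintype ι] [LinearOrder α] (s : ι → α) :
    (Multiset.sort (univ.val.map s) (· ≤ ·)).length = Fintype.card ι := by
  simp

section maxmin

variable {n p : ℕ}

theorem maxmin_eq_getElem (hp1 : 1 ≤ p) (hpn : p ≤ n) (s : Fin n → ℝ) :
    ∃ h : p - 1 < (Multiset.sort (univ.val.map s) (· ≤ ·)).length,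
      maxmin p s = (Multiset.sort (univ.val.map s) (· ≤ ·))[p - 1] := by
  have h : p - 1 < (Multiset.sort (univ.val.map s) (· ≤ ·)).length := by
    rw [length_sort_map_univ, Fintype.card_fin]; omega
  exact ⟨h, List.getD_eq_getElem _ _ h⟩

theorem exists_card_eq_forall_le_maxmin (hp1 : 1 ≤ p) (hpn : p ≤ n) (s : Fin n → ℝ) :
    ∃ S : Finset (Fin n), #S = p ∧ ∀ j ∈ S, s j ≤ maxmin p s := by
  obtain ⟨h, hs⟩ := maxmin_eq_getElem hp1 hpn s
  have hcard : p ≤ #{j | s j ≤ maxmin p s} := by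
    rw [card_filter_eq_countP_sort (· ≤ maxmin p s), hs]
    have := (Multiset.pairwise_sort _ (· ≤ ·)).succ_le_countP_le_getElem h
    omega
  obtain ⟨S, hS, hSp⟩ := exists_subset_card_eq hcard
  exact ⟨S, hSp, fun j hj => (mem_filter.mp (hS hj)).2⟩

theorem exists_card_eq_forall_maxmin_le (hp1 : 1 ≤ p) (hpn : p ≤ n) (s : Fin n → ℝ) :
    ∃ S : Finset (Fin n), #S = n + 1 - p ∧ ∀ j ∈ S, maxmin p s ≤ s j := by
  obtain ⟨h, hs⟩ := maxmin_eq_getElem hp1 hpn s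
  have hcard : n + 1 - p ≤ #{j | maxmin p s ≤ s j} := by
    rw [card_filter_eq_countP_sort (maxmin p s ≤ ·), hs]
    have := (Multiset.pairwise_sort _ (· ≤ ·)).length_sub_le_countP_getElem_le h
    rw [length_sort_map_univ, Fintype.card_fin] at this
    omega
  obtain ⟨S, hS, hSp⟩ := exists_subset_card_eq hcard
  exact ⟨S, hSp, fun j hj => (mem_filter.mp (hS hj)).2⟩

end maxmin

theorem minMaxValue_le {n p : ℕ} {F : Fin n → Fin n → WithBot ℝ} {c : WithBot ℝ}
    (S₁ S₂ : Finset (Fin n)) (h₁ : #S₁ = p) (h₂ : #S₂ = n + 1 - p)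
    (hF : ∀ l ∈ S₁, ∀ m ∈ S₂, F l m ≤ c) : minMaxValue p F ≤ c :=
  (csInf_le (OrderBot.bddBelow _) ⟨S₁, S₂, h₁, h₂, rfl⟩ : minMaxValue p F ≤ _).trans <|
    Finset.sup_le fun q hq => hF q.1 (mem_product.mp hq).1 q.2 (mem_product.mp hq).2

theorem mem_zone_Dseq_zero {n : ℕ} (A : Fin n → Fin n → ℝ) (p : ℕ) (x : Fin n → ℝ) :
    x ∈ zone (Dseq A p 0) := by
  intro i j
  by_cases h : i = j <;> simp [Dseq, h]

theorem mem_zone_Dseq_succ {n p : ℕ} (hp1 : 1 ≤ p) (hpn : p ≤ n) {A : Fin n → Fin n → ℝ}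
    {x : Fin n → ℝ} {lam : ℝ} (hx : ∀ i, mmProd p A x i = lam + x i) {k : ℕ}
    (hk : x ∈ zone (Dseq A p k)) : x ∈ zone (Dseq A p (k + 1)) := by
  intro i j
  obtain ⟨S₁, hS₁, hle⟩ := exists_card_eq_forall_le_maxmin hp1 hpn (fun l => A i l + x l)
  obtain ⟨S₂, hS₂, hge⟩ := exists_card_eq_forall_maxmin_le hp1 hpn (fun m => A j m + x m)
  rw [Dseq]
  refine minMaxValue_le S₁ S₂ hS₁ hS₂ fun l hl m hm => ?_
  have hl' : A i l + x l ≤ lam + x i := (hle l hl).trans_eq (hx i)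
  have hm' : lam + x j ≤ A j m + x m := (hx j).symm.trans_le (hge m hm)
  calc ((A i l - A j m : ℝ) : WithBot ℝ) + Dseq A p k l m
      ≤ ((A i l - A j m : ℝ) : WithBot ℝ) + ((x l - x m : ℝ) : WithBot ℝ) := by
        gcongr; exact hk l m
    _ = ((A i l - A j m + (x l - x m) : ℝ) : WithBot ℝ) := (WithBot.coe_add _ _).symm
    _ ≤ ((x i - x j : ℝ) : WithBot ℝ) := WithBot.coe_le_coe.mpr (by linarith)

theorem eigenspace_subset_zones_general (n p : ℕ) (hp1 : 1 ≤ p) (hpn : p ≤ n)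
    (A : Fin n → Fin n → ℝ) (x : Fin n → ℝ) (lam : ℝ)
    (hx : ∀ i, mmProd p A x i = lam + x i) :
    ∀ k : ℕ, x ∈ zone (Dseq A p k) := by
  intro k
  induction k with
  | zero => exact mem_zone_Dseq_zero A p x
  | succ k ih => exact mem_zone_Dseq_succ hp1 hpn hx ih

/-- Every maxmin-`p` eigenvector of `A` lies in every zone `Z_p^k = Zone(D_p^k)`:
the eigenspace `E_p(A)` is contained in each over-approximating zone. -/
theorem eigenspace_subset_zones (n p : ℕ) (hn : 1 ≤ n) (hp1 : 1 ≤ p) (hpn : p ≤ n)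
    (A : Fin n → Fin n → ℝ) (x : Fin n → ℝ) (lam : ℝ)
    (hx : ∀ i, mmProd p A x i = lam + x i) :
    ∀ k : ℕ, x ∈ zone (Dseq A p k) :=
  eigenspace_subset_zones_general n p hp1 hpn A x lam hx
end

section
/- Let n ≥ 1, let p be an integer with 1 ≤ p ≤ n, let A and D be n×n real matrices, and suppose x ∈ ℝⁿ satisfies x_i − x_j ≥ D(i,j) for all i, j. Define L(i,j) := ⊕_p(l ↦ A(i,l) + D(l,j)) and U(i,j) := ⊕_p(l ↦ A(i,l) − D(j,l)). If i, j ∈ {1,…,n} satisfy A(i,j) = L(i,j) = U(i,j), then (i,j) is an active entry of A with respect to p and x, i.e., (A ⊗_p x)_i = A(i,j) + x_j. -/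
open Finset

namespace List

variable {α : Type*} [LinearOrder α]

theorem SortedLE.getElem_le_iff_lt_countP {l : List α} (hl : l.SortedLE) {k : ℕ}
    (hk : k < l.length) (t : α) : l[k] ≤ t ↔ k < l.countP (· ≤ t) := by
  constructor
  · intro hkt
    have htake : (l.take (k + 1)).countP (· ≤ t) = k + 1 := by
      rw [countP_eq_length.2, length_take]
      · omega
      intro a ha
      obtain ⟨m, hm, rfl⟩ := getElem_of_mem ha
      rw [length_take] at hm
      simpa only [getElem_take, decide_eq_true_eq] using
        (hl.getElem_le_getElem_of_le (by omega)).trans hkt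
    calc k < (l.take (k + 1)).countP (· ≤ t) := by omega
      _ ≤ l.countP (· ≤ t) := (take_sublist _ _).countP_le
  · intro hcount
    by_contra! htk
    have hdrop : (l.drop k).countP (· ≤ t) = 0 := by
      rw [countP_eq_zero]
      intro a ha
      obtain ⟨m, hm, rfl⟩ := getElem_of_mem ha
      rw [length_drop] at hm
      simpa only [getElem_drop, decide_eq_true_eq, not_le] using
        htk.trans_le (hl.getElem_le_getElem_of_le (by omega))
    have htake : (l.take k).countP (· ≤ t) ≤ k :=
      countP_le_length.trans (length_take_le _ _)
    rw [← take_append_drop k l, countP_append, hdrop] at hcount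
    omega

end List

theorem maxmin_le_iff_s15 {n p : ℕ} (hp1 : 1 ≤ p) (hpn : p ≤ n) (f : Fin n → ℝ) (t : ℝ) :
    maxmin p f ≤ t ↔ p ≤ #{l | f l ≤ t} := by
  set s := Multiset.sort (Multiset.map f univ.val) (· ≤ ·)
  have hlen : s.length = n := by simp [s]
  have hcount : s.countP (· ≤ t) = #{l | f l ≤ t} := by
    rw [← Multiset.coe_countP, Multiset.sort_eq, Multiset.countP_map]
    rfl
  change s.getD (p - 1) 0 ≤ t ↔ _
  rw [List.getD_eq_getElem _ _ (by omega),
    (List.sortedLE_iff_pairwise.2 (Multiset.pairwise_sort _ _)).getElem_le_iff_lt_countP, hcount]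
  omega

theorem maxmin_mono {n p : ℕ} (hp1 : 1 ≤ p) (hpn : p ≤ n) {f g : Fin n → ℝ} (hfg : f ≤ g) :
    maxmin p f ≤ maxmin p g := by
  rw [maxmin_le_iff_s15 hp1 hpn]
  calc p ≤ #{l | g l ≤ maxmin p g} := (maxmin_le_iff_s15 hp1 hpn g _).1 le_rfl
    _ ≤ #{l | f l ≤ maxmin p g} := card_le_card fun l => by simpa using (hfg l).trans

theorem maxmin_add_const {n p : ℕ} (hp1 : 1 ≤ p) (hpn : p ≤ n) (f : Fin n → ℝ) (c : ℝ) :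
    maxmin p (fun l => f l + c) = maxmin p f + c := by
  refine eq_of_forall_ge_iff fun t => ?_
  simp only [maxmin_le_iff_s15 hp1 hpn, ← le_sub_iff_add_le]

theorem active_entry_of_LU_general (n p : ℕ) (hp1 : 1 ≤ p) (hpn : p ≤ n)
    (A D : Fin n → Fin n → ℝ) (x : Fin n → ℝ)
    (hzone : ∀ i j, x i - x j ≥ D i j)
    (i j : Fin n)
    (hL : A i j = maxmin p (fun l => A i l + D l j))
    (hU : A i j = maxmin p (fun l => A i l - D j l)) :
    mmProd p A x i = A i j + x j := by
  have hshift : maxmin p (fun l => A i l + x l + -x j) = mmProd p A x i + -x j :=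
    maxmin_add_const hp1 hpn _ _
  have hlower : A i j ≤ mmProd p A x i + -x j :=
    calc A i j = maxmin p (fun l => A i l + D l j) := hL
      _ ≤ _ := maxmin_mono hp1 hpn fun l => by linarith [hzone l j]
      _ = _ := hshift
  have hupper : mmProd p A x i + -x j ≤ A i j :=
    calc mmProd p A x i + -x j = _ := hshift.symm
      _ ≤ maxmin p (fun l => A i l - D j l) :=
        maxmin_mono hp1 hpn fun l => by linarith [hzone j l]
      _ = A i j := hU.symm
  linarith

/-- If `A i j = L i j = U i j`, where `L i j := ⊕_p(l ↦ A i l + D l j)` and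
`U i j := ⊕_p(l ↦ A i l − D j l)`, then `(i,j)` is an active entry of `A` with respect to
`p` and any `x` in the zone of `D`: `(A ⊗_p x)_i = A i j + x j`. -/
theorem active_entry_of_LU (n p : ℕ) (hn : 1 ≤ n) (hp1 : 1 ≤ p) (hpn : p ≤ n)
    (A D : Fin n → Fin n → ℝ) (x : Fin n → ℝ)
    (hzone : ∀ i j, x i - x j ≥ D i j)
    (i j : Fin n)
    (hL : A i j = maxmin p (fun l => A i l + D l j))
    (hU : A i j = maxmin p (fun l => A i l - D j l)) :
    mmProd p A x i = A i j + x j :=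
  active_entry_of_LU_general n p hp1 hpn A D x hzone i j hL hU
end
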